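/- Let f, g and h be entire functions given by everywhere absolutely convergent vector valued Dirichlet series, and let p ≥ 0, q ≥ 0, m ≥ 0 be integers. Assume f is of regular relative (m,q) Ritt growth with respect to h with 0 < λ_h^{(m,q)}(f) = ρ_h^{(m,q)}(f) < +∞, g is of regular relative (m,p) Ritt growth with respect to h with 0 < λ_h^{(m,p)}(g) = ρ_h^{(m,p)}(g) < +∞, and ρ_h^{(m,q)}(f) = ρ_h^{(m,p)}(g). Then λ_g^{(p,q)}(f) = ρ_g^{(p,q)}(f) = λ_f^{(q,p)}(g) = ρ_f^{(q,p)}(g) = 1. -/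

import Mathlib

open Filter Topology

noncomputable section

/-- An entire function given by an everywhere absolutely convergent
vector valued Dirichlet series, with coefficients in a Banach space `E`. -/
structure VVDS (E : Type*) [NormedAddCommGroup E] [NormedSpace ℂ E] [CompleteSpace E] where
  a : ℕ → E
  lam : ℕ → ℝ
  lam_pos : ∀ n, 0 < lam n
  lam_strictMono : StrictMono lam
  lam_tendsto : Tendsto lam atTop atTop
  log_index_bound : ∃ D : ℝ, ∀ᶠ n : ℕ in atTop, Real.log (n : ℝ) / lam n ≤ D
  coeff_decay : Tendsto (fun n => Real.log ‖a n‖ / lam n) atTop atBot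
  abs_conv : ∀ s : ℂ, Summable (fun n => Real.exp (s.re * lam n) * ‖a n‖)

variable {E F G : Type*} [NormedAddCommGroup E] [NormedSpace ℂ E] [CompleteSpace E]
  [NormedAddCommGroup F] [NormedSpace ℂ F] [CompleteSpace F]
  [NormedAddCommGroup G] [NormedSpace ℂ G] [CompleteSpace G]

/-- The entire function defined by the vector valued Dirichlet series. -/
def VVDS.toFun (f : VVDS E) (s : ℂ) : E := ∑' n, Complex.exp (s * (f.lam n : ℂ)) • f.a n

/-- The maximum modulus function `M_f(σ) = sup_t ‖f(σ+it)‖`. -/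
def VVDS.M (f : VVDS E) (σ : ℝ) : ℝ := ⨆ t : ℝ, ‖f.toFun ((σ : ℂ) + (t : ℂ) * Complex.I)‖

/-- The inverse function of the maximum modulus function. -/
def VVDS.Minv (f : VVDS E) (y : ℝ) : ℝ := sInf {σ : ℝ | y ≤ f.M σ}

/-- The (p,q)-th relative Ritt order of `f` with respect to `g`. -/
def relRittOrder (p q : ℕ) (f : VVDS E) (g : VVDS F) : EReal :=
  limsup (fun σ : ℝ =>
    ((Real.log^[p] (g.Minv (f.M σ)) / Real.log^[q] σ : ℝ) : EReal)) atTop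

/-- The (p,q)-th relative Ritt lower order of `f` with respect to `g`. -/
def relRittLowerOrder (p q : ℕ) (f : VVDS E) (g : VVDS F) : EReal :=
  liminf (fun σ : ℝ =>
    ((Real.log^[p] (g.Minv (f.M σ)) / Real.log^[q] σ : ℝ) : EReal)) atTop

/-- The (p,q)-th relative Ritt type of `f` with respect to `g`. -/
def relRittType (p q : ℕ) (f : VVDS E) (g : VVDS F) : EReal :=
  limsup (fun σ : ℝ =>
    ((Real.log^[p-1] (g.Minv (f.M σ)) /
      (Real.log^[q-1] σ) ^ (relRittOrder p q f g).toReal : ℝ) : EReal)) atTop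

/-- The (p,q)-th relative Ritt lower type of `f` with respect to `g`. -/
def relRittLowerType (p q : ℕ) (f : VVDS E) (g : VVDS F) : EReal :=
  liminf (fun σ : ℝ =>
    ((Real.log^[p-1] (g.Minv (f.M σ)) /
      (Real.log^[q-1] σ) ^ (relRittOrder p q f g).toReal : ℝ) : EReal)) atTop

/-- The (p,q)-th relative Ritt weak type of `f` with respect to `g`. -/
def relRittWeakType (p q : ℕ) (f : VVDS E) (g : VVDS F) : EReal :=
  liminf (fun σ : ℝ =>
    ((Real.log^[p-1] (g.Minv (f.M σ)) /
      (Real.log^[q-1] σ) ^ (relRittLowerOrder p q f g).toReal : ℝ) : EReal)) atTop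

/-- The growth indicator `τ̄_g^{(p,q)}(f)`. -/
def relRittUpperWeakType (p q : ℕ) (f : VVDS E) (g : VVDS F) : EReal :=
  limsup (fun σ : ℝ =>
    ((Real.log^[p-1] (g.Minv (f.M σ)) /
      (Real.log^[q-1] σ) ^ (relRittLowerOrder p q f g).toReal : ℝ) : EReal)) atTop

/-!
Write `L_f(σ) = log^[m] h⁻¹(M_f(σ))`, so that `L_f(σ) ~ ρ log^[q] σ` and `L_g(σ) ~ ρ log^[p] σ`.
Since `h⁻¹` is monotone, `M_f(σ) ≤ M_g(v)` forces `L_f(σ) ≤ L_g(v)`. Comparing the two growth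
rates, `M_g` exceeds `M_f(σ)` at `exp^[p] (α log^[q] σ)` for every `α > 1`, and only above
`exp^[p] (β log^[q] σ)` for every `β < 1`; hence `log^[p] g⁻¹(M_f(σ)) / log^[q] σ → 1`, and
symmetrically with `f` and `g` exchanged.

The analytic input is that a nonzero series has `M_f(σ) → ∞`. It comes from the coefficient bound
`e^{σ λₙ} ‖aₙ‖ ≤ M_f(σ)`: the mean of `e^{-i λₙ t} f(σ + i t)` over `[-T, T]` is
`∑ₖ sinc((λₖ - λₙ) T) e^{σ λₖ} aₖ`, which tends to `e^{σ λₙ} aₙ` as `T → ∞`.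
-/

open MeasureTheory

namespace Real

lemma iterate_log_zero (k : ℕ) : log^[k] 0 = 0 := Function.iterate_fixed log_zero k

lemma iterate_log_iterate_exp (k : ℕ) (x : ℝ) : log^[k] (exp^[k] x) = x :=
  Function.LeftInverse.iterate log_exp k x

lemma strictMonoOn_iterate_log (k : ℕ) : StrictMonoOn (log^[k]) (Set.Ici (exp^[k] 1)) := by
  induction k with
  | zero => exact strictMono_id.strictMonoOn _
  | succ k ih =>
    intro x hx y hy hxy
    rw [Set.mem_Ici, Function.iterate_succ_apply'] at hx hy
    have hx0 : 0 < x := (exp_pos _).trans_le hx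
    simp only [Function.iterate_succ_apply]
    exact ih ((le_log_iff_exp_le hx0).2 hx) ((le_log_iff_exp_le (hx0.trans hxy)).2 hy)
      (log_lt_log hx0 hxy)

lemma iterate_log_lt_iterate_log {k : ℕ} {x y : ℝ} (hx : exp^[k] 1 ≤ x) (hxy : x < y) :
    log^[k] x < log^[k] y :=
  strictMonoOn_iterate_log k hx (hx.trans hxy.le) hxy

lemma iterate_log_le_iterate_log {k : ℕ} {x y : ℝ} (hx : exp^[k] 1 ≤ x) (hxy : x ≤ y) :
    log^[k] x ≤ log^[k] y :=
  (strictMonoOn_iterate_log k).monotoneOn hx (hx.trans hxy) hxy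

lemma le_iterate_log_of_iterate_exp_le {k : ℕ} {t x : ℝ} (hx : exp^[k] t ≤ x) :
    t ≤ log^[k] x := by
  induction k generalizing x with
  | zero => exact hx
  | succ k ih =>
    rw [Function.iterate_succ_apply'] at hx
    rw [Function.iterate_succ_apply]
    exact ih ((le_log_iff_exp_le ((exp_pos _).trans_le hx)).2 hx)

lemma tendsto_iterate_log_atTop (k : ℕ) : Tendsto (log^[k]) atTop atTop :=
  tendsto_log_atTop.iterate k

lemma tendsto_iterate_exp_atTop (k : ℕ) : Tendsto (exp^[k]) atTop atTop :=
  tendsto_exp_atTop.iterate k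

lemma integral_exp_mul_I_eq_sinc (d : ℝ) {T : ℝ} (hT : T ≠ 0) :
    ∫ t in -T..T, Complex.exp (↑(d * t) * Complex.I) = ↑(2 * T * sinc (d * T)) := by
  rcases eq_or_ne d 0 with rfl | hd
  · simp only [zero_mul, Complex.ofReal_zero, Complex.exp_zero, intervalIntegral.integral_const,
      sub_neg_eq_add, Complex.real_smul, Complex.ofReal_add, mul_one, sinc_zero,
      Complex.ofReal_mul, Complex.ofReal_ofNat]
    ring
  · have hd' : (d : ℂ) ≠ 0 := by exact_mod_cast hd
    have hT' : (T : ℂ) ≠ 0 := by exact_mod_cast hT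
    have hsubst := intervalIntegral.integral_comp_mul_left
      (fun x : ℝ => Complex.exp (x * Complex.I)) hd (a := -T) (b := T)
    simp only [Complex.ofReal_mul] at hsubst ⊢
    rw [hsubst, mul_neg, integral_exp_mul_I_eq_sin, sinc_of_ne_zero (mul_ne_zero hd hT),
      Complex.real_smul]
    push_cast
    field_simp

lemma tendsto_sinc_mul_atTop {d : ℝ} (hd : d ≠ 0) :
    Tendsto (fun T => sinc (d * T)) atTop (𝓝 0) := by
  refine squeeze_zero_norm' ?_
    (tendsto_inv_atTop_zero.comp (tendsto_id.const_mul_atTop (abs_pos.2 hd)))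
  filter_upwards [eventually_gt_atTop 0] with T hT
  show |sinc (d * T)| ≤ (|d| * T)⁻¹
  rw [sinc_of_ne_zero (mul_ne_zero hd hT.ne'), abs_div, div_eq_mul_inv, abs_mul, abs_of_pos hT]
  exact mul_le_of_le_one_left (by positivity) (abs_sin_le_one _)

end Real

namespace VVDS

section Analytic

variable (f : VVDS E)

def majorant (σ : ℝ) : ℝ := ∑' n, Real.exp (σ * f.lam n) * ‖f.a n‖

lemma summable_majorant (σ : ℝ) : Summable fun n => Real.exp (σ * f.lam n) * ‖f.a n‖ := by
  simpa using f.abs_conv σ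

lemma norm_exp_smul (s : ℂ) (n : ℕ) :
    ‖Complex.exp (s * f.lam n) • f.a n‖ = Real.exp (s.re * f.lam n) * ‖f.a n‖ := by
  rw [norm_smul, Complex.norm_exp, Complex.re_mul_ofReal]

lemma summable_norm_exp_smul (s : ℂ) :
    Summable fun n => ‖Complex.exp (s * f.lam n) • f.a n‖ := by
  simpa only [f.norm_exp_smul] using f.abs_conv s

lemma norm_toFun_le_majorant (s : ℂ) : ‖f.toFun s‖ ≤ f.majorant s.re := by
  simpa only [toFun, majorant, f.norm_exp_smul] using
    norm_tsum_le_tsum_norm (f.summable_norm_exp_smul s)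

lemma norm_toFun_le_M (σ t : ℝ) : ‖f.toFun (σ + t * Complex.I)‖ ≤ f.M σ := by
  refine le_ciSup (f := fun t : ℝ => ‖f.toFun (σ + t * Complex.I)‖) ⟨f.majorant σ, ?_⟩ t
  rintro _ ⟨t, rfl⟩
  simpa using f.norm_toFun_le_majorant (σ + t * Complex.I)

lemma M_nonneg (σ : ℝ) : 0 ≤ f.M σ :=
  (norm_nonneg _).trans (f.norm_toFun_le_M σ 0)

lemma M_le_majorant (σ : ℝ) : f.M σ ≤ f.majorant σ :=
  ciSup_le fun t => by simpa using f.norm_toFun_le_majorant (σ + t * Complex.I)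

lemma majorant_mono : Monotone f.majorant := fun _ _ hστ =>
  Summable.tsum_le_tsum (fun n => by gcongr; exact (f.lam_pos n).le)
    (f.summable_majorant _) (f.summable_majorant _)

lemma tendsto_majorant_atBot : Tendsto f.majorant atBot (𝓝 0) := by
  have hterm (n : ℕ) : Tendsto (fun σ => Real.exp (σ * f.lam n) * ‖f.a n‖) atBot (𝓝 0) := by
    simpa using (Real.tendsto_exp_atBot.comp
      (tendsto_id.atBot_mul_const (f.lam_pos n))).mul_const ‖f.a n‖
  rw [← tsum_zero]
  refine tendsto_tsum_of_dominated_convergence (f.summable_majorant 0) hterm ?_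
  filter_upwards [eventually_le_atBot 0] with σ hσ n
  rw [Real.norm_of_nonneg (by positivity)]
  gcongr
  nlinarith [f.lam_pos n]

lemma hasSum_exp_mul_I_smul (n : ℕ) (σ t : ℝ) :
    HasSum (fun k => Complex.exp (↑((f.lam k - f.lam n) * t) * Complex.I) •
        Complex.exp (σ * f.lam k) • f.a k)
      (Complex.exp (↑(-(f.lam n * t)) * Complex.I) • f.toFun (σ + t * Complex.I)) := by
  convert ((f.summable_norm_exp_smul (σ + t * Complex.I)).of_norm.hasSum).const_smul
    (Complex.exp (↑(-(f.lam n * t)) * Complex.I)) using 1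
  · funext k
    rw [smul_smul, smul_smul, ← Complex.exp_add, ← Complex.exp_add]
    push_cast
    ring_nf
  · rfl

lemma integral_exp_mul_I_smul_toFun (n : ℕ) (σ : ℝ) {T : ℝ} (hT : T ≠ 0) :
    ∫ t in -T..T, Complex.exp (↑(-(f.lam n * t)) * Complex.I) • f.toFun (σ + t * Complex.I) =
      (↑(2 * T) : ℂ) • ∑' k, (↑(Real.sinc ((f.lam k - f.lam n) * T)) : ℂ) •
        Complex.exp (σ * f.lam k) • f.a k := by
  have hsum := intervalIntegral.hasSum_integral_of_dominated_convergence (μ := volume)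
    (a := -T) (b := T)
    (F := fun k t => Complex.exp (↑((f.lam k - f.lam n) * t) * Complex.I) •
      Complex.exp (σ * f.lam k) • f.a k)
    (fun k _ => ‖Complex.exp (σ * f.lam k) • f.a k‖) (fun k => by fun_prop)
    (fun k => ae_of_all _ fun t _ => by rw [norm_smul, Complex.norm_exp_ofReal_mul_I, one_mul])
    (ae_of_all _ fun _ _ => f.summable_norm_exp_smul σ) intervalIntegrable_const
    (ae_of_all _ fun t _ => f.hasSum_exp_mul_I_smul n σ t)
  rw [← hsum.tsum_eq, ← tsum_const_smul'']
  refine tsum_congr fun k => ?_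
  rw [intervalIntegral.integral_smul_const, Real.integral_exp_mul_I_eq_sinc _ hT,
    Complex.ofReal_mul, mul_smul]

lemma tendsto_tsum_sinc_smul (n : ℕ) (σ : ℝ) :
    Tendsto (fun T => ∑' k, (↑(Real.sinc ((f.lam k - f.lam n) * T)) : ℂ) •
      Complex.exp (σ * f.lam k) • f.a k) atTop (𝓝 (Complex.exp (σ * f.lam n) • f.a n)) := by
  rw [← tsum_ite_eq n fun k => Complex.exp (σ * f.lam k) • f.a k]
  refine tendsto_tsum_of_dominated_convergence (f.summable_norm_exp_smul σ) (fun k => ?_)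
    (Eventually.of_forall fun T k => ?_)
  · rcases eq_or_ne k n with rfl | hk
    · simp
    · have hsinc := (Complex.continuous_ofReal.tendsto 0).comp
        (Real.tendsto_sinc_mul_atTop (sub_ne_zero.2 (f.lam_strictMono.injective.ne hk)))
      simpa [hk] using hsinc.smul_const (Complex.exp (σ * f.lam k) • f.a k)
  · rw [norm_smul, Complex.norm_real, Real.norm_eq_abs]
    exact mul_le_of_le_one_left (norm_nonneg _) (Real.abs_sinc_le_one _)

lemma norm_exp_smul_le_M (n : ℕ) (σ : ℝ) : ‖Complex.exp (σ * f.lam n) • f.a n‖ ≤ f.M σ := by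
  refine le_of_tendsto (f.tendsto_tsum_sinc_smul n σ).norm ?_
  filter_upwards [eventually_gt_atTop 0] with T hT
  have hint := intervalIntegral.norm_integral_le_of_norm_le_const (a := -T) (b := T)
    (f := fun t : ℝ => Complex.exp (↑(-(f.lam n * t)) * Complex.I) • f.toFun (σ + t * Complex.I))
    (C := f.M σ) fun t _ => by
      rw [norm_smul, Complex.norm_exp_ofReal_mul_I, one_mul]
      exact f.norm_toFun_le_M σ t
  rw [f.integral_exp_mul_I_smul_toFun n σ hT.ne', norm_smul, Complex.norm_real, Real.norm_eq_abs,
    abs_of_pos (by positivity), sub_neg_eq_add, abs_of_pos (by positivity)] at hint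
  nlinarith

lemma tendsto_M_atTop {n : ℕ} (hn : f.a n ≠ 0) : Tendsto f.M atTop atTop := by
  refine tendsto_atTop_mono (fun σ => ?_) <|
    (Real.tendsto_exp_atTop.comp (tendsto_id.atTop_mul_const (f.lam_pos n))).atTop_mul_const
      (norm_pos_iff.2 hn)
  simpa [f.norm_exp_smul] using f.norm_exp_smul_le_M n σ

lemma M_eq_zero (hf : ∀ n, f.a n = 0) (σ : ℝ) : f.M σ = 0 := by
  simp [M, toFun, hf]

end Analytic

section Inverse

variable (f : VVDS E)

lemma bddBelow_setOf_le_M {y : ℝ} (hy : 0 < y) : BddBelow {σ | y ≤ f.M σ} := by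
  obtain ⟨σ₀, hσ₀⟩ := eventually_atBot.1 (f.tendsto_majorant_atBot.eventually_lt_const hy)
  exact ⟨σ₀, fun σ hσ => le_of_not_gt fun hlt =>
    (hσ.trans (f.M_le_majorant σ)).not_gt (hσ₀ σ hlt.le)⟩

lemma Minv_le {y σ : ℝ} (hy : 0 < y) (hσ : y ≤ f.M σ) : f.Minv y ≤ σ :=
  csInf_le (f.bddBelow_setOf_le_M hy) hσ

lemma le_Minv (hf : Tendsto f.M atTop atTop) {y R : ℝ} (hR : ∀ σ, y ≤ f.M σ → R ≤ σ) :
    R ≤ f.Minv y :=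
  le_csInf (hf.eventually_ge_atTop y).exists hR

lemma Minv_mono (hf : Tendsto f.M atTop atTop) {y₁ y₂ : ℝ} (hy₁ : 0 < y₁) (hy : y₁ ≤ y₂) :
    f.Minv y₁ ≤ f.Minv y₂ :=
  csInf_le_csInf (f.bddBelow_setOf_le_M hy₁) (hf.eventually_ge_atTop y₂).exists
    fun _ hσ => hy.trans hσ

lemma tendsto_Minv_atTop (hf : Tendsto f.M atTop atTop) : Tendsto f.Minv atTop atTop := by
  refine tendsto_atTop.2 fun R => ?_
  filter_upwards [eventually_gt_atTop (f.majorant R)] with y hy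
  exact f.le_Minv hf fun σ hσ => le_of_not_gt fun hlt =>
    (hσ.trans ((f.M_le_majorant σ).trans (f.majorant_mono hlt.le))).not_gt hy

-- Junk values: `sInf univ = 0` and `sInf ∅ = 0` in `ℝ`.
lemma Minv_of_nonpos {y : ℝ} (hy : y ≤ 0) : f.Minv y = 0 := by
  rw [Minv, Set.eq_univ_of_forall (s := {σ | y ≤ f.M σ}) fun σ => hy.trans (f.M_nonneg σ),
    Real.sInf_univ]

lemma Minv_eq_zero (hf : ∀ n, f.a n = 0) (y : ℝ) : f.Minv y = 0 := by
  rcases le_or_gt y 0 with hy | hy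
  · exact f.Minv_of_nonpos hy
  · rw [Minv, Set.eq_empty_of_forall_notMem (s := {σ | y ≤ f.M σ})
      fun σ hσ => hy.not_ge (hσ.trans (f.M_eq_zero hf σ).le), Real.sInf_empty]

end Inverse

lemma tendsto_M_atTop_of_tendsto {f : VVDS E} {h : VVDS G} {m q : ℕ} {ρ : ℝ} (hρ : ρ ≠ 0)
    (hφ : Tendsto (fun σ => Real.log^[m] (h.Minv (f.M σ)) / Real.log^[q] σ) atTop (𝓝 ρ)) :
    Tendsto f.M atTop atTop ∧ Tendsto h.M atTop atTop := by
  suffices (∃ n, f.a n ≠ 0) ∧ ∃ n, h.a n ≠ 0 by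
    obtain ⟨⟨n, hn⟩, ⟨k, hk⟩⟩ := this
    exact ⟨f.tendsto_M_atTop hn, h.tendsto_M_atTop hk⟩
  by_contra! hzero
  have hMinv (σ : ℝ) : h.Minv (f.M σ) = 0 := by
    by_cases hf : ∃ n, f.a n ≠ 0
    · exact h.Minv_eq_zero (hzero hf) _
    · rw [f.M_eq_zero (by simpa using hf), h.Minv_of_nonpos le_rfl]
  refine hρ (tendsto_nhds_unique hφ ?_)
  simp [hMinv, Real.iterate_log_zero]

section Comparison

variable {f : VVDS E} {g : VVDS F} {h : VVDS G} {p q m : ℕ} {ρ : ℝ}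

lemma eventually_iterate_log_Minv_M_le (hMf : Tendsto f.M atTop atTop)
    (hMg : Tendsto g.M atTop atTop) (hMh : Tendsto h.M atTop atTop) (hρ : 0 < ρ)
    (hφ : Tendsto (fun σ => Real.log^[m] (h.Minv (f.M σ)) / Real.log^[q] σ) atTop (𝓝 ρ))
    (hψ : Tendsto (fun σ => Real.log^[m] (h.Minv (g.M σ)) / Real.log^[p] σ) atTop (𝓝 ρ))
    {α : ℝ} (hα : 1 < α) :
    ∀ᶠ σ in atTop, Real.log^[p] (g.Minv (f.M σ)) ≤ α * Real.log^[q] σ := by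
  obtain ⟨ρ₁, hρρ₁, hρ₁α⟩ := exists_between (lt_mul_of_one_lt_right hρ hα)
  obtain ⟨ρ₂, hρ₁ρ₂, hρ₂ρ⟩ := exists_between ((div_lt_iff₀ (by linarith)).2 hρ₁α)
  rw [div_lt_iff₀ (by linarith)] at hρ₁ρ₂
  have hu : Tendsto (fun σ => Real.exp^[p] (α * Real.log^[q] σ)) atTop atTop :=
    (Real.tendsto_iterate_exp_atTop p).comp
      ((Real.tendsto_iterate_log_atTop q).const_mul_atTop (by linarith))
  have hg_growth : ∀ᶠ w in atTop, ρ₂ * Real.log^[p] w ≤ Real.log^[m] (h.Minv (g.M w)) ∧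
      Real.exp^[m] 1 ≤ h.Minv (g.M w) ∧ 0 < g.M w := by
    filter_upwards [hψ.eventually (eventually_ge_nhds hρ₂ρ),
      (Real.tendsto_iterate_log_atTop p).eventually_gt_atTop 0,
      ((h.tendsto_Minv_atTop hMh).comp hMg).eventually_ge_atTop (Real.exp^[m] 1),
      hMg.eventually_gt_atTop 0] with w hψw hLw hw hMgw
    exact ⟨(le_div_iff₀ hLw).1 hψw, hw, hMgw⟩
  filter_upwards [hu.eventually hg_growth, hφ.eventually (eventually_le_nhds hρρ₁),
    (Real.tendsto_iterate_log_atTop q).eventually_gt_atTop 0, hMf.eventually_gt_atTop 0,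
    ((g.tendsto_Minv_atTop hMg).comp hMf).eventually_ge_atTop (Real.exp^[p] 1)]
    with σ ⟨hgu, hu1, hMgu⟩ hφσ hL hMfσ hv
  rw [Real.iterate_log_iterate_exp] at hgu
  rw [div_le_iff₀ hL] at hφσ
  have hlt : f.M σ < g.M (Real.exp^[p] (α * Real.log^[q] σ)) := by
    by_contra! hle
    have := Real.iterate_log_le_iterate_log hu1 (h.Minv_mono hMh hMgu hle)
    -- `ρ₂ α L ≤ L_g(u) ≤ L_f(σ) ≤ ρ₁ L < ρ₂ α L` with `L = log^[q] σ`
    nlinarith [mul_lt_mul_of_pos_right hρ₁ρ₂ hL]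
  simpa [Real.iterate_log_iterate_exp] using
    Real.iterate_log_le_iterate_log hv (g.Minv_le hMfσ hlt.le)

lemma eventually_le_iterate_log_Minv_M (hMf : Tendsto f.M atTop atTop)
    (hMg : Tendsto g.M atTop atTop) (hMh : Tendsto h.M atTop atTop) (hρ : 0 < ρ)
    (hφ : Tendsto (fun σ => Real.log^[m] (h.Minv (f.M σ)) / Real.log^[q] σ) atTop (𝓝 ρ))
    (hψ : Tendsto (fun σ => Real.log^[m] (h.Minv (g.M σ)) / Real.log^[p] σ) atTop (𝓝 ρ))
    {β : ℝ} (hβ0 : 0 < β) (hβ1 : β < 1) :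
    ∀ᶠ σ in atTop, β * Real.log^[q] σ ≤ Real.log^[p] (g.Minv (f.M σ)) := by
  obtain ⟨ρ₁, hρρ₁, hρ₁β⟩ := exists_between ((lt_div_iff₀ hβ0).2 (mul_lt_of_lt_one_right hρ hβ1))
  obtain ⟨ρ₂, hβρ₂, hρ₂ρ⟩ := exists_between ((lt_div_iff₀' hβ0).1 hρ₁β)
  have hg_growth : ∀ᶠ w in atTop, Real.log^[m] (h.Minv (g.M w)) ≤ ρ₁ * Real.log^[p] w ∧
      Real.exp^[p] 1 ≤ w := by
    filter_upwards [hψ.eventually (eventually_le_nhds hρρ₁),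
      (Real.tendsto_iterate_log_atTop p).eventually_gt_atTop 0,
      eventually_ge_atTop (Real.exp^[p] 1)] with w hψw hLw hw
    exact ⟨(div_le_iff₀ hLw).1 hψw, hw⟩
  obtain ⟨T, hT⟩ := eventually_atTop.1 hg_growth
  filter_upwards [hφ.eventually (eventually_ge_nhds hρ₂ρ),
    (Real.tendsto_iterate_log_atTop q).eventually_gt_atTop 0, hMf.eventually_gt_atTop 0,
    ((g.tendsto_Minv_atTop hMg).comp hMf).eventually_ge_atTop T,
    ((h.tendsto_Minv_atTop hMh).comp hMf).eventually_ge_atTop (Real.exp^[m] 1)]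
    with σ hφσ hL hMfσ hvT hw
  rw [le_div_iff₀ hL] at hφσ
  rw [Function.comp_apply] at hvT hw
  refine Real.le_iterate_log_of_iterate_exp_le (g.le_Minv hMg fun v hv => ?_)
  obtain ⟨hgv, hv1⟩ := hT v (hvT.trans (g.Minv_le hMfσ hv))
  have := Real.iterate_log_le_iterate_log hw (h.Minv_mono hMh hMfσ hv)
  by_contra! hlt
  have hlogv := Real.iterate_log_lt_iterate_log hv1 hlt
  rw [Real.iterate_log_iterate_exp] at hlogv
  -- `ρ₂ L ≤ L_f(σ) ≤ L_g(v) ≤ ρ₁ log^[p] v < ρ₁ β L < ρ₂ L` with `L = log^[q] σ`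
  nlinarith [mul_lt_mul_of_pos_left hlogv (hρ.trans hρρ₁), mul_lt_mul_of_pos_right hβρ₂ hL]

theorem tendsto_iterate_log_Minv_M_div (hMf : Tendsto f.M atTop atTop)
    (hMg : Tendsto g.M atTop atTop) (hMh : Tendsto h.M atTop atTop) (hρ : 0 < ρ)
    (hφ : Tendsto (fun σ => Real.log^[m] (h.Minv (f.M σ)) / Real.log^[q] σ) atTop (𝓝 ρ))
    (hψ : Tendsto (fun σ => Real.log^[m] (h.Minv (g.M σ)) / Real.log^[p] σ) atTop (𝓝 ρ)) :
    Tendsto (fun σ => Real.log^[p] (g.Minv (f.M σ)) / Real.log^[q] σ) atTop (𝓝 1) := by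
  have hL := (Real.tendsto_iterate_log_atTop q).eventually_gt_atTop 0
  refine tendsto_order.2 ⟨fun b hb => ?_, fun b hb => ?_⟩
  · obtain ⟨β, hbβ, hβ1⟩ := exists_between (max_lt hb one_pos)
    filter_upwards [eventually_le_iterate_log_Minv_M hMf hMg hMh hρ hφ hψ
      ((le_max_right b 0).trans_lt hbβ) hβ1, hL] with σ hσ hLσ
    exact ((le_max_left b 0).trans_lt hbβ).trans_le ((le_div_iff₀ hLσ).2 hσ)
  · obtain ⟨α, h1α, hαb⟩ := exists_between hb
    filter_upwards [eventually_iterate_log_Minv_M_le hMf hMg hMh hρ hφ hψ h1α, hL]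
      with σ hσ hLσ
    exact ((div_le_iff₀ hLσ).2 hσ).trans_lt hαb

end Comparison

end VVDS

lemma tendsto_toReal_limsup_of_liminf_eq_limsup {α : Type*} {l : Filter α} {u : α → ℝ}
    (h : liminf (fun x => (u x : EReal)) l = limsup (fun x => (u x : EReal)) l)
    (htop : limsup (fun x => (u x : EReal)) l ≠ ⊤)
    (hbot : limsup (fun x => (u x : EReal)) l ≠ ⊥) :
    Tendsto u l (𝓝 (limsup (fun x => (u x : EReal)) l).toReal) := by
  have hlim := tendsto_of_liminf_eq_limsup h rfl isBounded_le_of_top isBounded_ge_of_bot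
  rw [← EReal.coe_toReal htop hbot] at hlim
  exact EReal.tendsto_coe.1 hlim

lemma tendsto_of_relRittLowerOrder_eq_relRittOrder {p q : ℕ} {f : VVDS E} {g : VVDS F}
    (hfg : relRittLowerOrder p q f g = relRittOrder p q f g) (htop : relRittOrder p q f g ≠ ⊤)
    (hbot : relRittOrder p q f g ≠ ⊥) :
    Tendsto (fun σ => Real.log^[p] (g.Minv (f.M σ)) / Real.log^[q] σ) atTop
      (𝓝 (relRittOrder p q f g).toReal) :=
  tendsto_toReal_limsup_of_liminf_eq_limsup hfg htop hbot

lemma relRittLowerOrder_eq_and_relRittOrder_eq_of_tendsto {p q : ℕ} {f : VVDS E} {g : VVDS F}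
    {r : ℝ} (hfg : Tendsto (fun σ => Real.log^[p] (g.Minv (f.M σ)) / Real.log^[q] σ) atTop (𝓝 r)) :
    relRittLowerOrder p q f g = r ∧ relRittOrder p q f g = r :=
  ⟨(EReal.tendsto_coe.2 hfg).liminf_eq, (EReal.tendsto_coe.2 hfg).limsup_eq⟩

theorem stmt_4_general (f : VVDS E) (g : VVDS F) (h : VVDS G) (p q m : ℕ)
    (hf1 : (0 : EReal) < relRittLowerOrder m q f h)
    (hfr : relRittLowerOrder m q f h = relRittOrder m q f h)
    (hf3 : relRittOrder m q f h < ⊤)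
    (hgr : relRittLowerOrder m p g h = relRittOrder m p g h)
    (hfg : relRittOrder m q f h = relRittOrder m p g h)
    :
    relRittLowerOrder p q f g = relRittOrder p q f g ∧ relRittOrder p q f g = relRittLowerOrder q p g f ∧ relRittLowerOrder q p g f = relRittOrder q p g f ∧ relRittOrder q p g f = 1 := by
  have hpos : 0 < relRittOrder m q f h := hfr ▸ hf1
  have hρ := EReal.toReal_pos hpos hf3.ne
  have hφ := tendsto_of_relRittLowerOrder_eq_relRittOrder hfr hf3.ne hpos.ne_bot
  have hψ := tendsto_of_relRittLowerOrder_eq_relRittOrder hgr (hfg ▸ hf3.ne) (hfg ▸ hpos.ne_bot)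
  rw [← hfg] at hψ
  obtain ⟨hMf, hMh⟩ := VVDS.tendsto_M_atTop_of_tendsto hρ.ne' hφ
  obtain ⟨hMg, -⟩ := VVDS.tendsto_M_atTop_of_tendsto hρ.ne' hψ
  obtain ⟨hl₁, ho₁⟩ := relRittLowerOrder_eq_and_relRittOrder_eq_of_tendsto
    (VVDS.tendsto_iterate_log_Minv_M_div hMf hMg hMh hρ hφ hψ)
  obtain ⟨hl₂, ho₂⟩ := relRittLowerOrder_eq_and_relRittOrder_eq_of_tendsto
    (VVDS.tendsto_iterate_log_Minv_M_div hMg hMf hMh hρ hψ hφ)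
  rw [EReal.coe_one] at hl₁ ho₁ hl₂ ho₂
  exact ⟨hl₁.trans ho₁.symm, ho₁.trans hl₂.symm, hl₂.trans ho₂.symm, ho₂⟩

theorem stmt_4 (f : VVDS E) (g : VVDS F) (h : VVDS G) (p q m : ℕ)
    (hf1 : (0 : EReal) < relRittLowerOrder m q f h)
    (hfr : relRittLowerOrder m q f h = relRittOrder m q f h)
    (hf3 : relRittOrder m q f h < ⊤)
    (hg1 : (0 : EReal) < relRittLowerOrder m p g h)
    (hgr : relRittLowerOrder m p g h = relRittOrder m p g h)
    (hg3 : relRittOrder m p g h < ⊤)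
    (hfg : relRittOrder m q f h = relRittOrder m p g h)
    :
    relRittLowerOrder p q f g = relRittOrder p q f g ∧ relRittOrder p q f g = relRittLowerOrder q p g f ∧ relRittLowerOrder q p g f = relRittOrder q p g f ∧ relRittOrder q p g f = 1 :=
  stmt_4_general f g h p q m hf1 hfr hf3 hgr hfg
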